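/- Let δ ∈ (0, 1/2) and let η : [0,1] → [0,1] be a smooth function with η ≡ 1 on [0,δ], η ≡ 0 on [2δ,1], and |η'| ≤ 2/δ. Let u₁, u₂, u₃ : [0,1]×ℝ → ℝ be C¹ functions, 1-periodic in the second variable, with Σᵢ (sup |uᵢ| + sup |∂ₓuᵢ|) < δ/10, and suppose u₁(0,y) + u₂(0,y) + u₃(0,y) = 0 for all y. With indices mod 3, define wⱼ(y) = ((u_{j−1}(0,y) − u_{j+1}(0,y))/√3) · nⱼ ∈ ℝ². Fix i ∈ {1,2,3} and y ∈ ℝ. If x, z ∈ [0,1] satisfy the equation in ℝ²: −x·nᵢ + uᵢ(x,y)·νᵢ + η(x)·wᵢ(y) = −z·n_{i−1} + u_{i−1}(z,y)·ν_{i−1} + η(z)·w_{i−1}(y), then x = z = 0. -/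

import Mathlib

open Set Real

noncomputable section

/-- The strip `[0,1] × ℝ`, representing `[0,1] × S¹` via `1`-periodicity in `y`. -/
def Strip : Set (ℝ × ℝ) := Set.Icc (0:ℝ) 1 ×ˢ (Set.univ : Set ℝ)

/-- `x`-partial derivative (one-sided at the endpoints of `[0,1]`). -/
def pdx (v : ℝ → ℝ → ℝ) (x y : ℝ) : ℝ := derivWithin (fun t => v t y) (Set.Icc 0 1) x

/-- `y`-partial derivative. -/
def pdy (v : ℝ → ℝ → ℝ) (x y : ℝ) : ℝ := deriv (fun s => v x s) y

def pdxx (v : ℝ → ℝ → ℝ) (x y : ℝ) : ℝ := derivWithin (fun t => pdx v t y) (Set.Icc 0 1) x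

def pdxy (v : ℝ → ℝ → ℝ) (x y : ℝ) : ℝ := deriv (fun s => pdx v x s) y

def pdyy (v : ℝ → ℝ → ℝ) (x y : ℝ) : ℝ := deriv (fun s => pdy v x s) y

/-- Laplacian `Δv = ∂²v/∂x² + ∂²v/∂y²`. -/
def lap (v : ℝ → ℝ → ℝ) (x y : ℝ) : ℝ := pdxx v x y + pdyy v x y

/-- `1`-periodicity in the second variable (i.e. a function on `[0,1] × S¹`). -/
def PeriodicY (v : ℝ → ℝ → ℝ) : Prop := ∀ x y, v x (y + 1) = v x y

/-- `v ∈ C²([0,1] × S¹)`. -/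
def C2Strip (v : ℝ → ℝ → ℝ) : Prop :=
  PeriodicY v ∧ ContDiffOn ℝ 2 (fun p : ℝ × ℝ => v p.1 p.2) Strip

/-- `v ∈ C^∞([0,1] × S¹)`. -/
def SmoothStrip (v : ℝ → ℝ → ℝ) : Prop :=
  PeriodicY v ∧ ContDiffOn ℝ (⊤ : ℕ∞) (fun p : ℝ × ℝ => v p.1 p.2) Strip

/-- `f` is `a`-Hölder continuous on the strip. -/
def HolderStrip (a : ℝ) (f : ℝ → ℝ → ℝ) : Prop :=
  ∃ C : ℝ, ∀ x ∈ Set.Icc (0:ℝ) 1, ∀ x' ∈ Set.Icc (0:ℝ) 1, ∀ y y' : ℝ,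
    |f x y - f x' y'| ≤ C * dist ((x, y) : ℝ × ℝ) ((x', y') : ℝ × ℝ) ^ a

/-- sup of `|f|` over the strip. -/
def supStrip (f : ℝ → ℝ → ℝ) : ℝ :=
  sSup {r : ℝ | ∃ x ∈ Set.Icc (0:ℝ) 1, ∃ y : ℝ, r = |f x y|}

/-- `a`-Hölder seminorm over the strip. -/
def holStrip (a : ℝ) (f : ℝ → ℝ → ℝ) : ℝ :=
  sSup {r : ℝ | ∃ x ∈ Set.Icc (0:ℝ) 1, ∃ x' ∈ Set.Icc (0:ℝ) 1, ∃ y y' : ℝ,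
    ((x, y) : ℝ × ℝ) ≠ ((x', y') : ℝ × ℝ) ∧
    r = |f x y - f x' y'| / dist ((x, y) : ℝ × ℝ) ((x', y') : ℝ × ℝ) ^ a}

/-- `f ∈ C^{0,a}([0,1] × S¹)`. -/
def MemC0αStrip (a : ℝ) (f : ℝ → ℝ → ℝ) : Prop :=
  PeriodicY f ∧ ContinuousOn (fun p : ℝ × ℝ => f p.1 p.2) Strip ∧ HolderStrip a f

/-- `v ∈ C^{2,a}([0,1] × S¹)`. -/
def MemC2αStrip (a : ℝ) (v : ℝ → ℝ → ℝ) : Prop :=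
  C2Strip v ∧ HolderStrip a (pdxx v) ∧ HolderStrip a (pdxy v) ∧ HolderStrip a (pdyy v)

/-- The `C^{0,a}` norm on the strip. -/
def normC0αStrip (a : ℝ) (f : ℝ → ℝ → ℝ) : ℝ := supStrip f + holStrip a f

/-- The `C^{2,a}` norm on the strip. -/
def normC2αStrip (a : ℝ) (v : ℝ → ℝ → ℝ) : ℝ :=
  supStrip v + supStrip (pdx v) + supStrip (pdy v) + supStrip (pdxx v) + supStrip (pdxy v)
    + supStrip (pdyy v) + holStrip a (pdxx v) + holStrip a (pdxy v) + holStrip a (pdyy v)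

/-- `1`-periodic functions on `ℝ`, i.e. functions on `S¹ = ℝ/ℤ`. -/
def PeriodicC (φ : ℝ → ℝ) : Prop := ∀ y, φ (y + 1) = φ y

def supCirc (φ : ℝ → ℝ) : ℝ := sSup {r : ℝ | ∃ y : ℝ, r = |φ y|}

def holCirc (a : ℝ) (φ : ℝ → ℝ) : ℝ :=
  sSup {r : ℝ | ∃ y y' : ℝ, y ≠ y' ∧ r = |φ y - φ y'| / |y - y'| ^ a}

def HolderCirc (a : ℝ) (φ : ℝ → ℝ) : Prop :=
  ∃ C : ℝ, ∀ y y' : ℝ, |φ y - φ y'| ≤ C * |y - y'| ^ a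

/-- `φ ∈ C^{1,a}(S¹)`. -/
def MemC1αCirc (a : ℝ) (φ : ℝ → ℝ) : Prop :=
  PeriodicC φ ∧ ContDiff ℝ 1 φ ∧ HolderCirc a (deriv φ)

/-- `φ ∈ C^{2,a}(S¹)`. -/
def MemC2αCirc (a : ℝ) (φ : ℝ → ℝ) : Prop :=
  PeriodicC φ ∧ ContDiff ℝ 2 φ ∧ HolderCirc a (deriv (deriv φ))

/-- The `C^{1,a}` norm on the circle. -/
def normC1αCirc (a : ℝ) (φ : ℝ → ℝ) : ℝ :=
  supCirc φ + supCirc (deriv φ) + holCirc a (deriv φ)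

/-- The `C^{2,a}` norm on the circle. -/
def normC2αCirc (a : ℝ) (φ : ℝ → ℝ) : ℝ :=
  supCirc φ + supCirc (deriv φ) + supCirc (deriv (deriv φ)) + holCirc a (deriv (deriv φ))

/-- The vector `wⱼ(y) = ((u_{j-1}(0,y) - u_{j+1}(0,y))/√3) nⱼ ∈ ℝ²`. -/
def wvec (u : Fin 3 → ℝ → ℝ → ℝ) (n : Fin 3 → ℝ × ℝ) (j : Fin 3) (y : ℝ) : ℝ × ℝ :=
  ((u (j - 1) 0 y - u (j + 1) 0 y) / Real.sqrt 3) • n j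


/-- Auxiliary: the strip has unique differentiability. -/
lemma strip_uniqueDiffOn : UniqueDiffOn ℝ Strip := by
  apply uniqueDiffOn_convex ((convex_Icc (0:ℝ) 1).prod convex_univ)
  rw [Strip, interior_prod_eq, interior_Icc, interior_univ]
  exact (nonempty_Ioo.mpr one_pos).prod univ_nonempty

lemma sup_bound (v : ℝ → ℝ → ℝ) (hper : PeriodicY v)
    (hc : ContinuousOn (fun p : ℝ × ℝ => v p.1 p.2) Strip) :
    ∀ x ∈ Set.Icc (0:ℝ) 1, ∀ y : ℝ, |v x y| ≤ supStrip v := by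
  have hK : IsCompact ((fun p : ℝ × ℝ => |v p.1 p.2|) ''
      (Set.Icc (0:ℝ) 1 ×ˢ Set.Icc (0:ℝ) 1)) := by
    apply (isCompact_Icc.prod isCompact_Icc).image_of_continuousOn
    exact (hc.mono (fun p hp => ⟨hp.1, trivial⟩)).abs
  have hsub : {r : ℝ | ∃ x ∈ Set.Icc (0:ℝ) 1, ∃ y : ℝ, r = |v x y|} ⊆
      (fun p : ℝ × ℝ => |v p.1 p.2|) '' (Set.Icc (0:ℝ) 1 ×ˢ Set.Icc (0:ℝ) 1) := by
    rintro r ⟨x, hx, y, rfl⟩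
    refine ⟨(x, Int.fract y), ⟨hx, ⟨Int.fract_nonneg y, (Int.fract_lt_one y).le⟩⟩, ?_⟩
    have hp : Function.Periodic (fun s => v x s) 1 := fun s => hper x s
    have h2 := hp.sub_int_mul_eq (x := y) ⌊y⌋
    simp only [mul_one] at h2
    simp only [Int.fract]
    exact congrArg abs h2
  intro x hx y
  exact le_csSup (hK.bddAbove.mono hsub) ⟨x, hx, y, rfl⟩

lemma slice_hasDerivWithinAt (v : ℝ → ℝ → ℝ)
    (hC1 : ContDiffOn ℝ 1 (fun p : ℝ × ℝ => v p.1 p.2) Strip)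
    {x : ℝ} (hx : x ∈ Set.Icc (0:ℝ) 1) (y : ℝ) :
    HasDerivWithinAt (fun t => v t y)
      (fderivWithin ℝ (fun p : ℝ × ℝ => v p.1 p.2) Strip (x, y) (1, 0))
      (Set.Icc (0:ℝ) 1) x := by
  have hmem : ((x, y) : ℝ × ℝ) ∈ Strip := ⟨hx, trivial⟩
  have hF := ((hC1.differentiableOn one_ne_zero) (x, y) hmem).hasFDerivWithinAt
  have hι : HasDerivWithinAt (fun t : ℝ => ((t, y) : ℝ × ℝ)) ((1 : ℝ), (0 : ℝ))
      (Set.Icc (0:ℝ) 1) x :=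
    (HasDerivAt.prodMk (hasDerivAt_id x) (hasDerivAt_const x y)).hasDerivWithinAt
  have hmaps : Set.MapsTo (fun t : ℝ => ((t, y) : ℝ × ℝ)) (Set.Icc (0:ℝ) 1) Strip :=
    fun t ht => ⟨ht, trivial⟩
  exact hF.comp_hasDerivWithinAt x hι hmaps

lemma pdx_eq_fderivWithin (v : ℝ → ℝ → ℝ)
    (hC1 : ContDiffOn ℝ 1 (fun p : ℝ × ℝ => v p.1 p.2) Strip)
    {x : ℝ} (hx : x ∈ Set.Icc (0:ℝ) 1) (y : ℝ) :
    pdx v x y = fderivWithin ℝ (fun p : ℝ × ℝ => v p.1 p.2) Strip (x, y) (1, 0) := by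
  unfold pdx
  exact (slice_hasDerivWithinAt v hC1 hx y).derivWithin (uniqueDiffOn_Icc one_pos x hx)

lemma pdx_continuousOn (v : ℝ → ℝ → ℝ)
    (hC1 : ContDiffOn ℝ 1 (fun p : ℝ × ℝ => v p.1 p.2) Strip) :
    ContinuousOn (fun p : ℝ × ℝ => pdx v p.1 p.2) Strip := by
  have h : ContinuousOn
      (fun p : ℝ × ℝ => fderivWithin ℝ (fun q : ℝ × ℝ => v q.1 q.2) Strip p (1, 0)) Strip :=
    (hC1.continuousOn_fderivWithin strip_uniqueDiffOn le_rfl).clm_apply continuousOn_const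
  apply h.congr
  intro p hp
  have := pdx_eq_fderivWithin v hC1 hp.1 p.2
  simpa using this

lemma pdx_periodic (v : ℝ → ℝ → ℝ) (hper : PeriodicY v) : PeriodicY (pdx v) := by
  intro x y
  unfold pdx
  congr 1
  funext t
  exact hper t y

lemma basicStrip (v : ℝ → ℝ → ℝ) (hper : PeriodicY v)
    (hC1 : ContDiffOn ℝ 1 (fun p : ℝ × ℝ => v p.1 p.2) Strip) :
    (∀ x ∈ Set.Icc (0:ℝ) 1, ∀ y : ℝ, |v x y| ≤ supStrip v) ∧
    (∀ x ∈ Set.Icc (0:ℝ) 1, ∀ y : ℝ, |v x y - v 0 y| ≤ supStrip (pdx v) * x) ∧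
    0 ≤ supStrip v ∧ 0 ≤ supStrip (pdx v) := by
  have hb := sup_bound v hper hC1.continuousOn
  have hbd := sup_bound (pdx v) (pdx_periodic v hper) (pdx_continuousOn v hC1)
  refine ⟨hb, ?_, le_trans (abs_nonneg _) (hb 0 ⟨le_rfl, zero_le_one⟩ 0),
    le_trans (abs_nonneg _) (hbd 0 ⟨le_rfl, zero_le_one⟩ 0)⟩
  intro x hx y
  have hdiff : DifferentiableOn ℝ (fun t => v t y) (Set.Icc (0:ℝ) 1) :=
    fun t ht => (slice_hasDerivWithinAt v hC1 ht y).differentiableWithinAt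
  have hmvt := (convex_Icc (0:ℝ) 1).norm_image_sub_le_of_norm_derivWithin_le hdiff
    (fun t ht => by
      have := hbd t ht y
      simpa [Real.norm_eq_abs, pdx] using this)
    ⟨le_rfl, zero_le_one⟩ hx
  simpa [Real.norm_eq_abs, abs_of_nonneg hx.1] using hmvt

lemma master_arith (δ m x z a0 b0 c0 av bv ex ez : ℝ)
    (hδ0 : 0 < δ) (hδ1 : δ < 1/2) (hm : m ≤ δ/10)
    (hx0 : 0 ≤ x) (hz0 : 0 ≤ z)
    (ha0 : |a0| ≤ m) (hb0 : |b0| ≤ m) (hc0 : |c0| ≤ m)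
    (hav : |av| ≤ m) (hbv : |bv| ≤ m)
    (hla : |av - a0| ≤ m * x) (hlb : |bv - b0| ≤ m * z)
    (hex0 : 0 ≤ ex) (hex1 : ex ≤ 1) (hez0 : 0 ≤ ez) (hez1 : ez ≤ 1)
    (hexone : x < δ → ex = 1) (hezone : z < δ → ez = 1)
    (hG1 : 2*(ex*(b0 - c0) - Real.sqrt 3 * x) + (ez*(c0 - a0) - Real.sqrt 3 * z) = 3*bv)
    (hG2 : 2*av = -(ez*(c0 - a0) - Real.sqrt 3 * z) - bv) :
    x = 0 ∧ z = 0 := by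
  set s := Real.sqrt 3 with hsdef
  have hs2 : s * s = 3 := Real.mul_self_sqrt (by norm_num)
  have hs0 : 0 ≤ s := Real.sqrt_nonneg 3
  have hs17 : (17/10 : ℝ) ≤ s := by
    have h1 : ((17/10 : ℝ)) = Real.sqrt ((17/10)^2) := (Real.sqrt_sq (by norm_num)).symm
    rw [h1, hsdef]
    exact Real.sqrt_le_sqrt (by norm_num)
  have hm0 : 0 ≤ m := le_trans (abs_nonneg a0) ha0
  have habx : |ex * (b0 - c0)| ≤ 2*m := by
    rw [abs_mul, abs_of_nonneg hex0]
    calc ex * |b0 - c0| ≤ 1 * |b0 - c0| := mul_le_mul_of_nonneg_right hex1 (abs_nonneg _)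
      _ = |b0 - c0| := one_mul _
      _ ≤ |b0| + |c0| := abs_sub _ _
      _ ≤ 2*m := by linarith [hb0, hc0]
  have habz : |ez * (c0 - a0)| ≤ 2*m := by
    rw [abs_mul, abs_of_nonneg hez0]
    calc ez * |c0 - a0| ≤ 1 * |c0 - a0| := mul_le_mul_of_nonneg_right hez1 (abs_nonneg _)
      _ = |c0 - a0| := one_mul _
      _ ≤ |c0| + |a0| := abs_sub _ _
      _ ≤ 2*m := by linarith [hc0, ha0]
  rw [abs_le] at ha0 hb0 hc0 hav hbv hla hlb habx habz
  have Ex : s * x = ex*(b0 - c0) - av - 2*bv := by linarith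
  have Ez : s * z = ez*(c0 - a0) + 2*av + bv := by linarith
  have hsx : s * x ≤ 5*m := by linarith [habx.2, hav.1, hbv.1]
  have hsz : s * z ≤ 5*m := by linarith [habz.2, hav.2, hbv.2]
  have h17x : (17/10)*x ≤ s*x := mul_le_mul_of_nonneg_right hs17 hx0
  have h17z : (17/10)*z ≤ s*z := mul_le_mul_of_nonneg_right hs17 hz0
  have hxd : x < δ := by linarith
  have hzd : z < δ := by linarith
  rw [hexone hxd] at Ex
  rw [hezone hzd] at Ez
  have key : s * (x + z) = (av - a0) + (b0 - bv) := by linear_combination Ex + Ez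
  have h17xz : (17/10)*(x+z) ≤ s*(x+z) :=
    mul_le_mul_of_nonneg_right hs17 (by linarith : (0:ℝ) ≤ x + z)
  have hmx : m*x ≤ (1/20)*x := mul_le_mul_of_nonneg_right (by linarith) hx0
  have hmz : m*z ≤ (1/20)*z := mul_le_mul_of_nonneg_right (by linarith) hz0
  have hxz : x + z ≤ 0 := by linarith [hla.2, hlb.1]
  exact ⟨le_antisymm (by linarith) hx0, le_antisymm (by linarith) hz0⟩

/-- distinct sheets of the perturbed cone meet only on the spine. -/
theorem sheets_meet_only_on_spine (δ : ℝ) (hδ : δ ∈ Set.Ioo (0:ℝ) (1/2))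
    (η : ℝ → ℝ) (hsm : ContDiffOn ℝ (⊤ : ℕ∞) η (Set.Icc (0:ℝ) 1))
    (hmap : ∀ x ∈ Set.Icc (0:ℝ) 1, η x ∈ Set.Icc (0:ℝ) 1)
    (hone : ∀ x ∈ Set.Icc (0:ℝ) δ, η x = 1)
    (hzero : ∀ x ∈ Set.Icc (2 * δ) 1, η x = 0)
    (hd : ∀ x ∈ Set.Icc (0:ℝ) 1, |derivWithin η (Set.Icc (0:ℝ) 1) x| ≤ 2 / δ)
    (n ν : Fin 3 → ℝ × ℝ)
    (hn0 : n 0 = (-1, 0)) (hn1 : n 1 = (1/2, -(Real.sqrt 3 / 2)))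
    (hn2 : n 2 = (1/2, Real.sqrt 3 / 2))
    (hν0 : ν 0 = (0, -1)) (hν1 : ν 1 = (Real.sqrt 3 / 2, 1/2))
    (hν2 : ν 2 = (-(Real.sqrt 3 / 2), 1/2))
    (u : Fin 3 → ℝ → ℝ → ℝ)
    (hC1 : ∀ i, ContDiffOn ℝ 1 (fun p : ℝ × ℝ => u i p.1 p.2) Strip)
    (hper : ∀ i, PeriodicY (u i))
    (hsmall : (∑ i, (supStrip (u i) + supStrip (pdx (u i)))) < δ / 10)
    (hsum : ∀ y : ℝ, u 0 0 y + u 1 0 y + u 2 0 y = 0)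
    (i : Fin 3) (y : ℝ) (x z : ℝ) (hx : x ∈ Set.Icc (0:ℝ) 1) (hz : z ∈ Set.Icc (0:ℝ) 1)
    (heq : (-x) • n i + (u i x y) • ν i + (η x) • wvec u n i y =
      (-z) • n (i - 1) + (u (i - 1) z y) • ν (i - 1) + (η z) • wvec u n (i - 1) y) :
    x = 0 ∧ z = 0 := by
  obtain ⟨hδ0, hδ1⟩ := hδ
  have hbasic := fun j => basicStrip (u j) (hper j) (hC1 j)
  have hterm : ∀ j : Fin 3, supStrip (u j) + supStrip (pdx (u j)) ≤
      ∑ k, (supStrip (u k) + supStrip (pdx (u k))) := by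
    intro j
    apply Finset.single_le_sum (f := fun k => supStrip (u k) + supStrip (pdx (u k)))
    · intro k _
      linarith [(hbasic k).2.2.1, (hbasic k).2.2.2]
    · exact Finset.mem_univ j
  have hsup : ∀ (j : Fin 3), ∀ x' ∈ Set.Icc (0:ℝ) 1, ∀ y' : ℝ, |u j x' y'| ≤ δ/10 := by
    intro j x' hx' y'
    have h1 := (hbasic j).1 x' hx' y'
    have h2 := hterm j
    linarith [(hbasic j).2.2.2, hsmall]
  have hlip : ∀ (j : Fin 3), ∀ x' ∈ Set.Icc (0:ℝ) 1, ∀ y' : ℝ,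
      |u j x' y' - u j 0 y'| ≤ (δ/10) * x' := by
    intro j x' hx' y'
    have h1 := (hbasic j).2.1 x' hx' y'
    have h2 := hterm j
    have h3 : supStrip (pdx (u j)) * x' ≤ (δ/10) * x' := by
      apply mul_le_mul_of_nonneg_right _ hx'.1
      linarith [(hbasic j).2.2.1, hsmall]
    linarith
  have h0mem : (0:ℝ) ∈ Set.Icc (0:ℝ) 1 := ⟨le_rfl, zero_le_one⟩
  have hs2 : Real.sqrt 3 * Real.sqrt 3 = 3 := Real.mul_self_sqrt (by norm_num)
  have hdivrw : ∀ t : ℝ, t / Real.sqrt 3 = t * Real.sqrt 3 / 3 := by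
    intro t
    rw [div_eq_div_iff (Real.sqrt_pos.mpr (by norm_num : (0:ℝ) < 3)).ne'
      (by norm_num : (3:ℝ) ≠ 0)]
    linear_combination (-t) * hs2
  have hexmem := hmap x hx
  have hezmem := hmap z hz
  have hxone : x < δ → η x = 1 := fun h => hone x ⟨hx.1, h.le⟩
  have hzone : z < δ → η z = 1 := fun h => hone z ⟨hz.1, h.le⟩
  have h1 := congrArg Prod.fst heq
  have h2 := congrArg Prod.snd heq
  have hi : i = 0 ∨ i = 1 ∨ i = 2 := by omega
  rcases hi with rfl | rfl | rfl
  · simp only [wvec, show ((0:Fin 3) - 1) = 2 from rfl, show ((0:Fin 3) + 1) = 1 from rfl,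
      show ((2:Fin 3) - 1) = 1 from rfl, show ((2:Fin 3) + 1) = 0 from rfl,
      hn0, hn1, hn2, hν0, hν1, hν2, Prod.fst_add, Prod.snd_add, Prod.smul_fst, Prod.smul_snd,
      smul_eq_mul, hdivrw] at h1 h2
    exact master_arith δ (δ/10) x z (u 0 0 y) (u 2 0 y) (u 1 0 y) (u 0 x y) (u 2 z y)
      (η x) (η z) hδ0 hδ1 le_rfl hx.1 hz.1
      (hsup 0 0 h0mem y) (hsup 2 0 h0mem y) (hsup 1 0 h0mem y)
      (hsup 0 x hx y) (hsup 2 z hz y) (hlip 0 x hx y) (hlip 2 z hz y)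
      hexmem.1 hexmem.2 hezmem.1 hezmem.2 hxone hzone
      (by linear_combination (-2*Real.sqrt 3) * h1 +
        ((-2/3)*(u 2 0 y)*(η x) + (2/3)*(u 1 0 y)*(η x) + (-1/3)*(u 1 0 y)*(η z)
          + (1/3)*(u 0 0 y)*(η z) + (u 2 z y)) * hs2)
      (by linear_combination (-2 : ℝ) * h2 +
        ((-1/3)*(u 1 0 y)*(η z) + (1/3)*(u 0 0 y)*(η z)) * hs2)
  · simp only [wvec, show ((1:Fin 3) - 1) = 0 from rfl, show ((1:Fin 3) + 1) = 2 from rfl,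
      show ((0:Fin 3) - 1) = 2 from rfl, show ((0:Fin 3) + 1) = 1 from rfl,
      hn0, hn1, hn2, hν0, hν1, hν2, Prod.fst_add, Prod.snd_add, Prod.smul_fst, Prod.smul_snd,
      smul_eq_mul, hdivrw] at h1 h2
    exact master_arith δ (δ/10) x z (u 1 0 y) (u 0 0 y) (u 2 0 y) (u 1 x y) (u 0 z y)
      (η x) (η z) hδ0 hδ1 le_rfl hx.1 hz.1
      (hsup 1 0 h0mem y) (hsup 0 0 h0mem y) (hsup 2 0 h0mem y)
      (hsup 1 x hx y) (hsup 0 z hz y) (hlip 1 x hx y) (hlip 0 z hz y)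
      hexmem.1 hexmem.2 hezmem.1 hezmem.2 hxone hzone
      (by linear_combination (Real.sqrt 3) * h1 + (-3 : ℝ) * h2 +
        ((-2/3)*(u 0 0 y)*(η x) + (2/3)*(u 2 0 y)*(η x) + (-1/3)*(u 2 0 y)*(η z)
          + (1/3)*(u 1 0 y)*(η z) + (-1/2)*(u 1 x y)) * hs2)
      (by linear_combination (Real.sqrt 3) * h1 + (1 : ℝ) * h2 +
        ((-1/2)*(u 1 x y) + (-1/3)*(u 2 0 y)*(η z) + (1/3)*(u 1 0 y)*(η z)) * hs2)
  · simp only [wvec, show ((2:Fin 3) - 1) = 1 from rfl, show ((2:Fin 3) + 1) = 0 from rfl,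
      show ((1:Fin 3) - 1) = 0 from rfl, show ((1:Fin 3) + 1) = 2 from rfl,
      hn0, hn1, hn2, hν0, hν1, hν2, Prod.fst_add, Prod.snd_add, Prod.smul_fst, Prod.smul_snd,
      smul_eq_mul, hdivrw] at h1 h2
    exact master_arith δ (δ/10) x z (u 2 0 y) (u 1 0 y) (u 0 0 y) (u 2 x y) (u 1 z y)
      (η x) (η z) hδ0 hδ1 le_rfl hx.1 hz.1
      (hsup 2 0 h0mem y) (hsup 1 0 h0mem y) (hsup 0 0 h0mem y)
      (hsup 2 x hx y) (hsup 1 z hz y) (hlip 2 x hx y) (hlip 1 z hz y)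
      hexmem.1 hexmem.2 hezmem.1 hezmem.2 hxone hzone
      (by linear_combination (Real.sqrt 3) * h1 + (3 : ℝ) * h2 +
        ((-2/3)*(u 1 0 y)*(η x) + (2/3)*(u 0 0 y)*(η x) + (-1/3)*(u 0 0 y)*(η z)
          + (1/3)*(u 2 0 y)*(η z) + (1/2)*(u 1 z y) + (1/2)*(u 2 x y)) * hs2)
      (by linear_combination (-Real.sqrt 3) * h1 + (1 : ℝ) * h2 +
        ((-1/2)*(u 2 x y) + (-1/3)*(u 0 0 y)*(η z) + (1/3)*(u 2 0 y)*(η z)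
          + (-1/2)*(u 1 z y)) * hs2)
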